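/- Let n ≥ 3, let |GHZ_n⟩ = (|0⟩^{⊗n} + |1⟩^{⊗n})/√2, and let ρ_cl = (1/2)·(|0⟩⟨0|^{⊗n} + |1⟩⟨1|^{⊗n}). Then for all indices 0 ≤ i ≠ j ≤ n−1 and all 2×2 complex matrices P and Q: ⟨GHZ_n| P^{(i)} |GHZ_n⟩ = Tr(ρ_cl · P^{(i)}) and ⟨GHZ_n| P^{(i)} Q^{(j)} |GHZ_n⟩ = Tr(ρ_cl · P^{(i)} Q^{(j)}). In particular, the GHZ state and the classical mixture ρ_cl give the same value to every Bell operator built only from one- and two-body terms. -/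

import Mathlib

/-!
`⟨GHZ| A |GHZ⟩` and `Tr(ρ_cl A)` differ only by the coherences `⟨0…0| A |1…1⟩` and
`⟨1…1| A |0…0⟩`. These vanish as soon as `A` does not flip some qubit `k`, and for
`n ≥ 3` a product `P⁽ⁱ⁾ Q⁽ʲ⁾` acts as the identity on a third qubit `k ∉ {i, j}`.
-/

noncomputable section

open scoped ComplexConjugate

/-- Operators on `n` qubits: `2ⁿ × 2ⁿ` complex matrices indexed by bitstrings. -/
abbrev QOp (n : ℕ) := Matrix (Fin n → Fin 2) (Fin n → Fin 2) ℂ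

/-- The single-qubit operator `M` acting on the `i`-th tensor factor and as the
identity on all the other factors. -/
def onQubit (n : ℕ) (i : Fin n) (M : Matrix (Fin 2) (Fin 2) ℂ) : QOp n :=
  Matrix.of fun f g =>
    M (f i) (g i) * ∏ j ∈ Finset.univ.erase i, (if f j = g j then (1 : ℂ) else 0)

/-- The collective operator `S_M = Σᵢ M⁽ⁱ⁾`. -/
def collS (n : ℕ) (M : Matrix (Fin 2) (Fin 2) ℂ) : QOp n := ∑ i : Fin n, onQubit n i M

/-- The collective two-body operator `S_{MN} = Σ_{i≠j} M⁽ⁱ⁾ N⁽ʲ⁾`. -/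
def collSS (n : ℕ) (M N : Matrix (Fin 2) (Fin 2) ℂ) : QOp n :=
  ∑ i : Fin n, ∑ j ∈ Finset.univ.erase i, onQubit n i M * onQubit n j N

def pauliX : Matrix (Fin 2) (Fin 2) ℂ := !![0, 1; 1, 0]
def pauliY : Matrix (Fin 2) (Fin 2) ℂ := !![0, -Complex.I; Complex.I, 0]
def pauliZ : Matrix (Fin 2) (Fin 2) ℂ := !![1, 0; 0, -1]

/-- The matrix element `⟨ψ| A |φ⟩`. -/
def braket {n : ℕ} (ψ : (Fin n → Fin 2) → ℂ) (A : QOp n) (φ : (Fin n → Fin 2) → ℂ) : ℂ :=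
  ∑ f : Fin n → Fin 2, ∑ g : Fin n → Fin 2, conj (ψ f) * A f g * φ g

/-- Kronecker delta `δ(a)` on the integers, valued in `ℂ`. -/
def kdel (a : ℤ) : ℂ := if a = 0 then 1 else 0

/-- The GHZ state `(|0⟩^{⊗n} + |1⟩^{⊗n})/√2`. -/
def ghz (n : ℕ) : (Fin n → Fin 2) → ℂ := fun f =>
  (((if f = fun _ => 0 then 1 else 0) + (if f = fun _ => 1 then 1 else 0)) : ℂ)
    / ((Real.sqrt 2 : ℝ) : ℂ)

/-- The classical mixture `ρ_cl = (1/2)(|0⟩⟨0|^{⊗n} + |1⟩⟨1|^{⊗n})`. -/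
def rhoCl (n : ℕ) : QOp n := Matrix.of fun f g =>
  (2 : ℂ)⁻¹ * (((if f = (fun _ => 0) ∧ g = (fun _ => 0) then 1 else 0)
    + (if f = (fun _ => 1) ∧ g = (fun _ => 1) then 1 else 0)) : ℂ)

def DiagonalOnQubit {n : ℕ} (k : Fin n) (A : QOp n) : Prop :=
  ∀ f g : Fin n → Fin 2, f k ≠ g k → A f g = 0

lemma diagonalOnQubit_onQubit {n : ℕ} {i k : Fin n} (hki : k ≠ i)
    (M : Matrix (Fin 2) (Fin 2) ℂ) : DiagonalOnQubit k (onQubit n i M) := by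
  intro f g hfg
  rw [onQubit, Matrix.of_apply,
    Finset.prod_eq_zero (Finset.mem_erase.mpr ⟨hki, Finset.mem_univ k⟩) (if_neg hfg), mul_zero]

lemma DiagonalOnQubit.mul {n : ℕ} {k : Fin n} {A B : QOp n}
    (hA : DiagonalOnQubit k A) (hB : DiagonalOnQubit k B) : DiagonalOnQubit k (A * B) := by
  intro f g hfg
  refine Finset.sum_eq_zero fun h _ => ?_
  by_cases hfh : f k = h k
  · exact mul_eq_zero_of_right _ (hB h g (hfh ▸ hfg))
  · exact mul_eq_zero_of_left (hA f h hfh) _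

lemma trace_rhoCl_mul {n : ℕ} (A : QOp n) :
    Matrix.trace (rhoCl n * A) =
      2⁻¹ * (A (fun _ => 0) (fun _ => 0) + A (fun _ => 1) (fun _ => 1)) := by
  simp [Matrix.trace, Matrix.mul_apply, rhoCl, ite_and, mul_add, add_mul,
    Finset.sum_add_distrib, Finset.sum_ite_eq']

lemma braket_ghz {n : ℕ} (A : QOp n) :
    braket (ghz n) A (ghz n) =
      2⁻¹ * (A (fun _ => 0) (fun _ => 0) + A (fun _ => 0) (fun _ => 1)
        + A (fun _ => 1) (fun _ => 0) + A (fun _ => 1) (fun _ => 1)) := by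
  have hsqrt : ((Real.sqrt 2 : ℝ) : ℂ) ^ 2 = 2 := by
    norm_cast
    exact Real.sq_sqrt zero_le_two
  simp only [braket, ghz, div_eq_mul_inv, map_mul, map_add, map_inv₀, Complex.conj_ofReal,
    apply_ite (starRingEnd ℂ), map_one, map_zero]
  simp [add_mul, mul_add, Finset.sum_add_distrib, ite_mul, mul_ite, Finset.sum_ite_eq']
  field_simp
  rw [hsqrt]
  ring

lemma braket_ghz_eq_trace_rhoCl_mul {n : ℕ} {k : Fin n} {A : QOp n}
    (hA : DiagonalOnQubit k A) :
    braket (ghz n) A (ghz n) = Matrix.trace (rhoCl n * A) := by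
  rw [braket_ghz, trace_rhoCl_mul, hA (fun _ => 0) (fun _ => 1) zero_ne_one,
    hA (fun _ => 1) (fun _ => 0) one_ne_zero]
  ring

theorem stmt_19_general (n : ℕ) (hn : 3 ≤ n) (i j : Fin n)
    (P Q : Matrix (Fin 2) (Fin 2) ℂ) :
    braket (ghz n) (onQubit n i P) (ghz n) = Matrix.trace (rhoCl n * onQubit n i P)
    ∧ braket (ghz n) (onQubit n i P * onQubit n j Q) (ghz n)
      = Matrix.trace (rhoCl n * (onQubit n i P * onQubit n j Q)) := by
  obtain ⟨k, hki, hkj⟩ := Fin.exists_ne_and_ne_of_two_lt i j hn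
  have hP := diagonalOnQubit_onQubit hki P
  exact ⟨braket_ghz_eq_trace_rhoCl_mul hP,
    braket_ghz_eq_trace_rhoCl_mul (hP.mul (diagonalOnQubit_onQubit hkj Q))⟩

/-- Theorem: the GHZ state and the classical mixture `ρ_cl` give the same expectation value
to every one-body operator `P⁽ⁱ⁾` and every two-body operator `P⁽ⁱ⁾Q⁽ʲ⁾` with `i ≠ j`. -/
theorem stmt_19 (n : ℕ) (hn : 3 ≤ n) (i j : Fin n) (hij : i ≠ j)
    (P Q : Matrix (Fin 2) (Fin 2) ℂ) :
    braket (ghz n) (onQubit n i P) (ghz n) = Matrix.trace (rhoCl n * onQubit n i P)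
    ∧ braket (ghz n) (onQubit n i P * onQubit n j Q) (ghz n)
      = Matrix.trace (rhoCl n * (onQubit n i P * onQubit n j Q)) :=
  stmt_19_general n hn i j P Q
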